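/- Let G be a finite group with unitary representation U on H, and suppose ρ is a perfectly asymmetric state on H with trivial stabilizer (the |G| orbit states are pairwise distinct and mutually orthogonal). Then for any state σ on any finite-dimensional H' carrying a representation V of G, there exists a G-covariant channel Φ : L(H) → L(H') (Φ(U(g)XU(g)†) = V(g)Φ(X)V(g)† for all g, X) with Φ(ρ) = σ. (Any asymmetric state is obtainable from a perfect reference frame by symmetric processing.) -/

import Mathlib

open Matrix
open scoped ComplexOrder Kronecker

/-- The extension `Φ ⊗ id_d` of a linear map on matrices to matrices over a
`d`-dimensional ancilla. -/
noncomputable def matExtend {n m : Type*} [Fintype n] [DecidableEq n]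
    [Fintype m] [DecidableEq m]
    (Φ : Matrix n n ℂ →ₗ[ℂ] Matrix m m ℂ) (d : ℕ)
    (X : Matrix (n × Fin d) (n × Fin d) ℂ) : Matrix (m × Fin d) (m × Fin d) ℂ :=
  Matrix.of fun p q => Φ (Matrix.of fun i j => X (i, p.2) (j, q.2)) p.1 q.1

/-- Complete positivity and trace preservation. -/
def IsCPTP {n m : Type*} [Fintype n] [DecidableEq n] [Fintype m] [DecidableEq m]
    (Φ : Matrix n n ℂ →ₗ[ℂ] Matrix m m ℂ) : Prop :=
  (∀ (d : ℕ) (X : Matrix (n × Fin d) (n × Fin d) ℂ),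
      X.PosSemidef → (matExtend Φ d X).PosSemidef) ∧
  (∀ X : Matrix n n ℂ, (Φ X).trace = X.trace)

/-!
Let `P` be the support projection of `ρ`. Orthogonality of the orbit states makes the translates
`U g P (U g)ᴴ` mutually orthogonal projections, so their sum `Q` is a `G`-invariant projection and
`F = P + |G|⁻¹ (1 - Q)` is positive with `∑ g, U g F (U g)ᴴ = 1`. This covariant POVM detects the
orbit state `U g ρ (U g)ᴴ` with certainty. Measuring it and preparing `V g σ (V g)ᴴ` on outcome `g`
is a measure-and-prepare channel, hence CPTP, and it is covariant because relabelling the outcomes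
by the group acts on both steps in the same way.
-/

theorem IsStarProjection.sum {ι R : Type*} [NonUnitalNonAssocSemiring R] [StarRing R]
    {s : Finset ι} {p : ι → R} (hp : ∀ i ∈ s, IsStarProjection (p i))
    (horth : ∀ i ∈ s, ∀ j ∈ s, i ≠ j → p i * p j = 0) :
    IsStarProjection (∑ i ∈ s, p i) := by
  classical
  induction s using Finset.induction_on with
  | empty => rw [Finset.sum_empty]; exact .zero R
  | insert a s ha ih =>
    rw [Finset.sum_insert ha]
    refine (hp a (s.mem_insert_self a)).add
      (ih (fun i hi => hp i (Finset.mem_insert_of_mem hi))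
        fun i hi j hj => horth i (Finset.mem_insert_of_mem hi) j (Finset.mem_insert_of_mem hj)) ?_
    rw [Finset.mul_sum]
    exact Finset.sum_eq_zero fun j hj =>
      horth a (s.mem_insert_self a) j (Finset.mem_insert_of_mem hj) (by rintro rfl; exact ha hj)

namespace Matrix

section MeasurePrepare

variable {ι κ n m : Type*} [Fintype ι] [Fintype κ] [Fintype n]

/-- The partial trace over `n` of `(M ⊗ 1) * X`. -/
def traceMulBlocks (M : Matrix n n ℂ) (X : Matrix (n × κ) (n × κ) ℂ) : Matrix κ κ ℂ :=
  of fun a b => (M * of fun i j => X (i, a) (j, b)).trace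

lemma traceMulBlocks_conjTranspose_mul [DecidableEq κ] (B : Matrix n n ℂ)
    (X : Matrix (n × κ) (n × κ) ℂ) :
    traceMulBlocks (Bᴴ * B) X =
      ∑ k, (of fun a (p : n × κ) => if p.2 = a then B k p.1 else 0) * X *
        (of fun a (p : n × κ) => if p.2 = a then B k p.1 else 0)ᴴ := by
  ext a b
  simp only [traceMulBlocks, trace, diag, mul_apply, of_apply, conjTranspose_apply, sum_apply,
    Fintype.sum_prod_type, ite_mul, zero_mul, Finset.sum_ite_eq', Finset.mem_univ, if_true,
    apply_ite star, star_zero, mul_ite, mul_zero, Finset.sum_mul]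
  conv_lhs => enter [2, i]; rw [Finset.sum_comm]
  rw [Finset.sum_comm]
  exact Finset.sum_congr rfl fun k _ => Finset.sum_congr rfl fun i _ =>
    Finset.sum_congr rfl fun j _ => by ring

open scoped MatrixOrder in
lemma PosSemidef.traceMulBlocks {M : Matrix n n ℂ} {X : Matrix (n × κ) (n × κ) ℂ}
    (hM : M.PosSemidef) (hX : X.PosSemidef) : (traceMulBlocks M X).PosSemidef := by
  classical
  obtain ⟨B, rfl⟩ := CStarAlgebra.nonneg_iff_eq_star_mul_self.mp hM.nonneg
  rw [star_eq_conjTranspose, traceMulBlocks_conjTranspose_mul]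
  exact posSemidef_sum _ fun k _ => hX.mul_mul_conjTranspose_same _

/-- Measure the POVM `E`, prepare `τ i` on outcome `i`. -/
noncomputable def measurePrepare (E : ι → Matrix n n ℂ) (τ : ι → Matrix m m ℂ) :
    Matrix n n ℂ →ₗ[ℂ] Matrix m m ℂ :=
  ∑ i, ((traceLinearMap n ℂ ℂ).comp (LinearMap.mulLeft ℂ (E i))).smulRight (τ i)

lemma measurePrepare_apply (E : ι → Matrix n n ℂ) (τ : ι → Matrix m m ℂ) (X : Matrix n n ℂ) :
    measurePrepare E τ X = ∑ i, (E i * X).trace • τ i := by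
  simp [measurePrepare]

lemma measurePrepare_apply_eq_of_trace_mul_eq_ite [DecidableEq ι] {E : ι → Matrix n n ℂ}
    (τ : ι → Matrix m m ℂ) {X : Matrix n n ℂ} {i₀ : ι}
    (hX : ∀ i, (E i * X).trace = if i = i₀ then 1 else 0) :
    measurePrepare E τ X = τ i₀ := by
  simp [measurePrepare_apply, hX]

variable [DecidableEq n] [Fintype m] [DecidableEq m]

lemma matExtend_measurePrepare (E : ι → Matrix n n ℂ) (τ : ι → Matrix m m ℂ) (d : ℕ)
    (X : Matrix (n × Fin d) (n × Fin d) ℂ) :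
    matExtend (measurePrepare E τ) d X = ∑ i, τ i ⊗ₖ traceMulBlocks (E i) X := by
  ext p q
  simp [matExtend, measurePrepare_apply, traceMulBlocks, sum_apply, mul_comm]

theorem isCPTP_measurePrepare {E : ι → Matrix n n ℂ} {τ : ι → Matrix m m ℂ}
    (hE : ∀ i, (E i).PosSemidef) (hE_sum : ∑ i, E i = 1)
    (hτ : ∀ i, (τ i).PosSemidef) (hτ_trace : ∀ i, (τ i).trace = 1) :
    IsCPTP (measurePrepare E τ) := by
  refine ⟨fun d X hX => ?_, fun X => ?_⟩
  · rw [matExtend_measurePrepare]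
    exact posSemidef_sum _ fun i _ => (hτ i).kronecker ((hE i).traceMulBlocks hX)
  · simp only [measurePrepare_apply, trace_sum, trace_smul, hτ_trace, smul_eq_mul, mul_one]
    rw [← trace_sum, ← Finset.sum_mul, hE_sum, one_mul]

end MeasurePrepare

section SupportProj

variable {n : Type*} [Fintype n] [DecidableEq n]

/-- The orthogonal projection onto the range of a Hermitian matrix: `x⁻¹ * x` is the indicator
of `x ≠ 0` because `0⁻¹ = 0` in `ℝ`. -/
noncomputable def supportProj (A : Matrix n n ℂ) : Matrix n n ℂ :=
  cfc (fun x : ℝ => x⁻¹ * x) A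

lemma isStarProjection_supportProj (A : Matrix n n ℂ) : IsStarProjection (supportProj A) := by
  have hs := A.finite_real_spectrum
  refine ⟨?_, cfc_predicate _ _⟩
  rw [IsIdempotentElem, supportProj, ← cfc_mul _ _ A (hs.continuousOn _) (hs.continuousOn _)]
  refine cfc_congr fun x _ => ?_
  by_cases hx : x = 0 <;> simp [hx]

lemma supportProj_mul_self {A : Matrix n n ℂ} (hA : A.IsHermitian) : supportProj A * A = A := by
  have hs := A.finite_real_spectrum
  nth_rw 2 [← cfc_id' ℝ A hA.isSelfAdjoint]
  rw [supportProj, ← cfc_mul _ _ A (hs.continuousOn _) (hs.continuousOn _)]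
  nth_rw 2 [← cfc_id' ℝ A hA.isSelfAdjoint]
  refine cfc_congr fun x _ => ?_
  by_cases hx : x = 0 <;> simp [hx]

lemma supportProj_mul_eq_zero {A M : Matrix n n ℂ} (hA : A.IsHermitian) (hAM : A * M = 0) :
    supportProj A * M = 0 := by
  have hs := A.finite_real_spectrum
  have h : supportProj A = cfc (fun x : ℝ => x⁻¹) A * A := by
    rw [supportProj, cfc_mul _ _ A (hs.continuousOn _) (hs.continuousOn _),
      cfc_id' ℝ A hA.isSelfAdjoint]
  rw [h, mul_assoc, hAM, mul_zero]

lemma supportProj_mul_supportProj_eq_zero {A B : Matrix n n ℂ} (hA : A.IsHermitian)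
    (hB : B.IsHermitian) (hAB : A * B = 0) : supportProj A * supportProj B = 0 := by
  have hPA := (isStarProjection_supportProj A).isSelfAdjoint
  have hPB := (isStarProjection_supportProj B).isSelfAdjoint
  have hBPA : B * supportProj A = 0 := by
    simpa [hPA.star_eq, hB.isSelfAdjoint.star_eq] using
      congr_arg star (supportProj_mul_eq_zero hA hAB)
  simpa [hPA.star_eq, hPB.star_eq] using congr_arg star (supportProj_mul_eq_zero hB hBPA)

end SupportProj

section UnitaryConj

variable {G n : Type*} [Group G] [Fintype n] [DecidableEq n]

noncomputable def unitaryConj (U : G →* unitaryGroup n ℂ) :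
    G →* (Matrix n n ℂ ≃⋆ₐ[ℂ] Matrix n n ℂ) :=
  (Unitary.conjStarAlgAut ℂ _).comp U

lemma unitaryConj_apply (U : G →* unitaryGroup n ℂ) (g : G) (A : Matrix n n ℂ) :
    unitaryConj U g A = (U g : Matrix n n ℂ) * A * (U g : Matrix n n ℂ)ᴴ :=
  rfl

lemma unitaryConj_unitaryConj (U : G →* unitaryGroup n ℂ) (g h : G) (A : Matrix n n ℂ) :
    unitaryConj U g (unitaryConj U h A) = unitaryConj U (g * h) A := by
  rw [map_mul]; rfl

lemma unitaryConj_supportProj (U : G →* unitaryGroup n ℂ) (g : G) {A : Matrix n n ℂ}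
    (hA : A.IsHermitian) : unitaryConj U g (supportProj A) = supportProj (unitaryConj U g A) :=
  StarAlgHomClass.map_cfc (S := ℂ) _ _ A (A.finite_real_spectrum.continuousOn _)
    ((continuous_const.mul continuous_id).mul continuous_const) hA.isSelfAdjoint
    (hA.isSelfAdjoint.map _)

lemma trace_unitaryConj (U : G →* unitaryGroup n ℂ) (g : G) (A : Matrix n n ℂ) :
    (unitaryConj U g A).trace = A.trace := by
  rw [unitaryConj_apply, trace_mul_cycle, ← star_eq_conjTranspose, Unitary.coe_star_mul_self,
    one_mul]

lemma trace_mul_unitaryConj (U : G →* unitaryGroup n ℂ) (g : G) (A X : Matrix n n ℂ) :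
    (A * unitaryConj U g X).trace = (unitaryConj U g⁻¹ A * X).trace := by
  rw [← trace_unitaryConj U g (unitaryConj U g⁻¹ A * X), map_mul, unitaryConj_unitaryConj,
    mul_inv_cancel, map_one, StarAlgEquiv.one_apply]

lemma unitaryConj_supportProj_mul [DecidableEq G] (U : G →* unitaryGroup n ℂ) {ρ : Matrix n n ℂ}
    (hρ : ρ.IsHermitian)
    (horth : ∀ g h : G, g ≠ h → unitaryConj U g ρ * unitaryConj U h ρ = 0) (g : G) :
    unitaryConj U g (supportProj ρ) * ρ = if g = 1 then ρ else 0 := by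
  split_ifs with hg
  · rw [hg, map_one, StarAlgEquiv.one_apply, supportProj_mul_self hρ]
  · have h := supportProj_mul_eq_zero (hρ.isSelfAdjoint.map (unitaryConj U g)) (horth g 1 hg)
    rwa [map_one, StarAlgEquiv.one_apply, ← unitaryConj_supportProj U g hρ] at h

theorem measurePrepare_unitaryConj [Fintype G] {m : Type*} [Fintype m] [DecidableEq m]
    (U : G →* unitaryGroup n ℂ) (V : G →* unitaryGroup m ℂ) (F : Matrix n n ℂ)
    (σ : Matrix m m ℂ) (g : G) (X : Matrix n n ℂ) :
    measurePrepare (unitaryConj U · F) (unitaryConj V · σ) (unitaryConj U g X) =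
      unitaryConj V g (measurePrepare (unitaryConj U · F) (unitaryConj V · σ) X) := by
  simp only [measurePrepare_apply, trace_mul_unitaryConj, unitaryConj_unitaryConj, map_sum,
    map_smul]
  exact Fintype.sum_equiv (Equiv.mulLeft g⁻¹) _ _ fun h => by simp

end UnitaryConj

section ReferenceFrame

variable {G n : Type*} [Group G] [Fintype G] [Fintype n] [DecidableEq n]
  (U : G →* unitaryGroup n ℂ)

noncomputable def orbitSupport (ρ : Matrix n n ℂ) : Matrix n n ℂ :=
  ∑ g, unitaryConj U g (supportProj ρ)

noncomputable def frameEffect (ρ : Matrix n n ℂ) : Matrix n n ℂ :=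
  supportProj ρ + (Fintype.card G : ℂ)⁻¹ • (1 - orbitSupport U ρ)

variable {ρ : Matrix n n ℂ}

lemma unitaryConj_orbitSupport (g : G) :
    unitaryConj U g (orbitSupport U ρ) = orbitSupport U ρ := by
  simp only [orbitSupport, map_sum, unitaryConj_unitaryConj]
  exact Fintype.sum_equiv (Equiv.mulLeft g) _ _ fun _ => rfl

lemma sum_unitaryConj_frameEffect : ∑ g, unitaryConj U g (frameEffect U ρ) = 1 := by
  have hcard : (Fintype.card G : ℂ) ≠ 0 := Nat.cast_ne_zero.mpr Fintype.card_ne_zero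
  simp only [frameEffect, map_add, map_smul, map_sub, map_one, unitaryConj_orbitSupport,
    Finset.sum_add_distrib, Finset.sum_const, Finset.card_univ, ← Nat.cast_smul_eq_nsmul ℂ,
    smul_smul, mul_inv_cancel₀ hcard, one_smul]
  exact add_sub_cancel (orbitSupport U ρ) 1

variable (hρ : ρ.IsHermitian)
  (horth : ∀ g h : G, g ≠ h → unitaryConj U g ρ * unitaryConj U h ρ = 0)
include hρ horth

lemma isStarProjection_orbitSupport : IsStarProjection (orbitSupport U ρ) :=
  IsStarProjection.sum (fun g _ => (isStarProjection_supportProj ρ).map _)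
    fun g _ h _ hgh => by
      rw [unitaryConj_supportProj U g hρ, unitaryConj_supportProj U h hρ]
      exact supportProj_mul_supportProj_eq_zero (hρ.isSelfAdjoint.map _)
        (hρ.isSelfAdjoint.map _) (horth g h hgh)

lemma orbitSupport_mul_self : orbitSupport U ρ * ρ = ρ := by
  classical
  simp [orbitSupport, Finset.sum_mul, unitaryConj_supportProj_mul U hρ horth]

open scoped MatrixOrder in
lemma posSemidef_frameEffect : (frameEffect U ρ).PosSemidef :=
  (isStarProjection_supportProj ρ).nonneg.posSemidef.add <|
    (isStarProjection_orbitSupport U hρ horth).one_sub.nonneg.posSemidef.smul <|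
      inv_nonneg.mpr (Nat.cast_nonneg _)

lemma trace_unitaryConj_frameEffect_mul [DecidableEq G] (g : G) :
    (unitaryConj U g (frameEffect U ρ) * ρ).trace = if g = 1 then ρ.trace else 0 := by
  have hQ : (1 - orbitSupport U ρ) * ρ = 0 := by
    rw [sub_mul, one_mul, orbitSupport_mul_self U hρ horth, sub_self]
  rw [frameEffect, map_add, map_smul, map_sub, map_one, unitaryConj_orbitSupport, add_mul,
    smul_mul_assoc, hQ, smul_zero, add_zero, unitaryConj_supportProj_mul U hρ horth]
  split_ifs <;> simp

end ReferenceFrame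

end Matrix

theorem perfect_reference_frame_generates_any_state_general
    {G : Type*} [Group G] [Fintype G]
    {H H' : Type*} [Fintype H] [DecidableEq H] [Fintype H'] [DecidableEq H']
    (U : G →* Matrix.unitaryGroup H ℂ) (V : G →* Matrix.unitaryGroup H' ℂ)
    (ρ : Matrix H H ℂ) (hρ : ρ.PosSemidef) (hρtr : ρ.trace = 1)
    (horth : ∀ g h : G, g ≠ h →
      ((U g : Matrix H H ℂ) * ρ * (U g : Matrix H H ℂ)ᴴ) *
        ((U h : Matrix H H ℂ) * ρ * (U h : Matrix H H ℂ)ᴴ) = 0)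
    (σ : Matrix H' H' ℂ) (hσ : σ.PosSemidef) (hσtr : σ.trace = 1) :
    ∃ Φ : Matrix H H ℂ →ₗ[ℂ] Matrix H' H' ℂ,
      IsCPTP Φ ∧
      (∀ (g : G) (X : Matrix H H ℂ),
        Φ ((U g : Matrix H H ℂ) * X * (U g : Matrix H H ℂ)ᴴ) =
          (V g : Matrix H' H' ℂ) * Φ X * (V g : Matrix H' H' ℂ)ᴴ) ∧
      Φ ρ = σ := by
  classical
  refine ⟨measurePrepare (unitaryConj U · (frameEffect U ρ)) (unitaryConj V · σ),
    isCPTP_measurePrepare ?_ (sum_unitaryConj_frameEffect U) ?_ ?_,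
    measurePrepare_unitaryConj U V _ σ, ?_⟩
  · exact fun g => (posSemidef_frameEffect U hρ.isHermitian horth).mul_mul_conjTranspose_same _
  · exact fun g => hσ.mul_mul_conjTranspose_same _
  · exact fun g => (trace_unitaryConj V g σ).trans hσtr
  · have hdetect (g : G) :
        (unitaryConj U g (frameEffect U ρ) * ρ).trace = if g = 1 then 1 else 0 := by
      rw [trace_unitaryConj_frameEffect_mul U hρ.isHermitian horth, hρtr]
    rw [measurePrepare_apply_eq_of_trace_mul_eq_ite _ hdetect, map_one, StarAlgEquiv.one_apply]

/-- Any state is obtainable from a perfect reference frame (a perfectly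
asymmetric state with trivial stabilizer) by symmetric, i.e. G-covariant,
processing. -/
theorem perfect_reference_frame_generates_any_state
    {G : Type*} [Group G] [Fintype G]
    {H H' : Type*} [Fintype H] [DecidableEq H] [Fintype H'] [DecidableEq H']
    (U : G →* Matrix.unitaryGroup H ℂ) (V : G →* Matrix.unitaryGroup H' ℂ)
    (ρ : Matrix H H ℂ) (hρ : ρ.PosSemidef) (hρtr : ρ.trace = 1)
    (hdistinct : ∀ g h : G, g ≠ h →
      (U g : Matrix H H ℂ) * ρ * (U g : Matrix H H ℂ)ᴴ ≠
        (U h : Matrix H H ℂ) * ρ * (U h : Matrix H H ℂ)ᴴ)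
    (horth : ∀ g h : G, g ≠ h →
      ((U g : Matrix H H ℂ) * ρ * (U g : Matrix H H ℂ)ᴴ) *
        ((U h : Matrix H H ℂ) * ρ * (U h : Matrix H H ℂ)ᴴ) = 0)
    (σ : Matrix H' H' ℂ) (hσ : σ.PosSemidef) (hσtr : σ.trace = 1) :
    ∃ Φ : Matrix H H ℂ →ₗ[ℂ] Matrix H' H' ℂ,
      IsCPTP Φ ∧
      (∀ (g : G) (X : Matrix H H ℂ),
        Φ ((U g : Matrix H H ℂ) * X * (U g : Matrix H H ℂ)ᴴ) =
          (V g : Matrix H' H' ℂ) * Φ X * (V g : Matrix H' H' ℂ)ᴴ) ∧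
      Φ ρ = σ :=
  perfect_reference_frame_generates_any_state_general U V ρ hρ hρtr horth σ hσ hσtr
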